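/- arXiv:math/0110208 — 4 statements merged into one kernel-verified Lean document; each statement's English description precedes it below -/
import Mathlib

section
/- Let 0 < ε < 1/2, Q = ⌊1/ε⌋, and let a/q < a'/q' be consecutive Farey fractions of order Q with q < q'. Then a/q ≤ (a'-ε)/q' < (a+ε)/q ≤ a'/q'. -/
/-- `a/q` is a Farey fraction of order `Q`. -/
def IsFarey (Q a q : ℕ) : Prop :=
  1 ≤ a ∧ a ≤ q ∧ q ≤ Q ∧ Nat.gcd a q = 1

/-- `a/q < a'/q'` are consecutive Farey fractions of order `Q`. -/
def FareyConsec (Q a q a' q' : ℕ) : Prop :=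
  IsFarey Q a q ∧ IsFarey Q a' q' ∧ (a : ℚ) / q < (a' : ℚ) / q' ∧
    ∀ b p : ℕ, IsFarey Q b p → ¬((a : ℚ) / q < (b : ℚ) / p ∧ (b : ℚ) / p < (a' : ℚ) / q')

lemma nat_div_lt_div (a q b p : ℕ) (hq : 0 < q) (hp : 0 < p) :
    (a : ℚ) / q < (b : ℚ) / p ↔ a * p < b * q := by
  rw [div_lt_div_iff₀ (by exact_mod_cast hq) (by exact_mod_cast hp)]
  exact_mod_cast Iff.rfl

/-- Consecutive Farey fractions have denominator sum exceeding `Q`. -/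
lemma farey_consec_sum {Q a q a' q' : ℕ} (h : FareyConsec Q a q a' q') : Q < q + q' := by
  obtain ⟨⟨ha1, haq, hqQ, hg⟩, ⟨ha'1, ha'q', hq'Q, hg'⟩, hlt, hmax⟩ := h
  by_contra hle
  push_neg at hle
  have hq : 0 < q := le_trans ha1 haq
  have hq' : 0 < q' := le_trans ha'1 ha'q'
  have hcross : a * q' < a' * q := (nat_div_lt_div a q a' q' hq hq').mp hlt
  set g := Nat.gcd (a + a') (q + q') with hgdef
  have hgpos : 0 < g := Nat.gcd_pos_of_pos_right _ (by omega)
  set b := (a + a') / g with hbdef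
  set p := (q + q') / g with hpdef
  have h1 : g * b = a + a' := Nat.mul_div_cancel' (Nat.gcd_dvd_left _ _)
  have h2 : g * p = q + q' := Nat.mul_div_cancel' (Nat.gcd_dvd_right _ _)
  have hppos : 0 < p :=
    Nat.div_pos (Nat.le_of_dvd (by omega) (Nat.gcd_dvd_right _ _)) hgpos
  have hbpos : 0 < b :=
    Nat.div_pos (Nat.le_of_dvd (by omega) (Nat.gcd_dvd_left _ _)) hgpos
  have hfarey : IsFarey Q b p := by
    refine ⟨hbpos, Nat.div_le_div_right (by omega), ?_, Nat.coprime_div_gcd_div_gcd hgpos⟩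
    calc p ≤ q + q' := Nat.div_le_self _ _
      _ ≤ Q := hle
  refine hmax b p hfarey ⟨?_, ?_⟩
  · rw [nat_div_lt_div a q b p hq hppos]
    have key : g * (a * p) < g * (b * q) := by
      calc g * (a * p) = a * (g * p) := by ring
        _ = a * (q + q') := by rw [h2]
        _ < (a + a') * q := by nlinarith
        _ = (g * b) * q := by rw [h1]
        _ = g * (b * q) := by ring
    exact Nat.lt_of_mul_lt_mul_left key
  · rw [nat_div_lt_div b p a' q' hppos hq']
    have key : g * (b * q') < g * (a' * p) := by
      calc g * (b * q') = (g * b) * q' := by ring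
        _ = (a + a') * q' := by rw [h1]
        _ < a' * (q + q') := by nlinarith
        _ = a' * (g * p) := by rw [h2]
        _ = g * (a' * p) := by ring
    exact Nat.lt_of_mul_lt_mul_left key

/-- Consecutive Farey fractions are unimodular. -/
lemma farey_consec_det {Q a q a' q' : ℕ} (h : FareyConsec Q a q a' q') :
    a' * q = a * q' + 1 := by
  obtain ⟨⟨ha1, haq, hqQ, hg⟩, ⟨ha'1, ha'q', hq'Q, hg'⟩, hlt, hmax⟩ := h
  have hq : 0 < q := le_trans ha1 haq
  have hq' : 0 < q' := le_trans ha'1 ha'q'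
  have hcross : a * q' < a' * q := (nat_div_lt_div a q a' q' hq hq').mp hlt
  have halt : a < q := by nlinarith [Nat.mul_le_mul_right q ha'q']
  haveI : NeZero q := ⟨by omega⟩
  obtain ⟨x, hx⟩ : ∃ x : ℕ, q ∣ a * x + 1 := by
    refine ⟨((-1 : ZMod q) * (a : ZMod q)⁻¹).val, ?_⟩
    rw [← ZMod.natCast_eq_zero_iff]
    push_cast
    rw [ZMod.natCast_val, ZMod.cast_id]
    have : (a : ZMod q) * ((-1 : ZMod q) * (a : ZMod q)⁻¹)
        = -((a : ZMod q) * (a : ZMod q)⁻¹) := by ring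
    rw [this, ZMod.coe_mul_inv_eq_one a hg]
    ring
  -- q divides a * (x % q) + 1 as well
  have h3 : q ∣ a * (x % q) + 1 := by
    have e1 : a * x + 1 = q * (a * (x / q)) + (a * (x % q) + 1) := by
      conv_lhs => rw [← Nat.div_add_mod x q]
      ring
    rw [e1] at hx
    exact (Nat.dvd_add_right (dvd_mul_right q _)).mp hx
  have hxlt : x % q < q := Nat.mod_lt x (by omega)
  have hxQ : x % q ≤ Q := by omega
  -- shift x % q into (Q - q, Q]
  set p := Q - (Q - x % q) % q with hpdef
  have hmodle : (Q - x % q) % q ≤ Q - x % q := Nat.mod_le _ _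
  have hmodlt : (Q - x % q) % q < q := Nat.mod_lt _ (by omega)
  have hxp : x % q ≤ p := by omega
  have hmod : q ∣ a * p + 1 := by
    have h2 : q ∣ p - x % q := by
      have e : p - x % q = (Q - x % q) - (Q - x % q) % q := by omega
      rw [e]; exact Nat.dvd_sub_mod _
    obtain ⟨k, hk⟩ := h2
    have hp' : p = x % q + q * k := by omega
    have e2 : a * p + 1 = q * (a * k) + (a * (x % q) + 1) := by rw [hp']; ring
    rw [e2]
    exact Nat.dvd_add (dvd_mul_right q _) h3
  have hplow : Q < p + q := by omega
  have hphigh : p ≤ Q := by omega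
  have hppos : 0 < p := by omega
  set b := (a * p + 1) / q with hbdef
  have hb : q * b = a * p + 1 := Nat.mul_div_cancel' hmod
  have hbpos : 0 < b := by
    rcases Nat.eq_zero_or_pos b with h0 | h0
    · rw [h0, Nat.mul_zero] at hb; omega
    · exact h0
  have hbp : b ≤ p := by
    have h1 : a * p + 1 ≤ q * p := by nlinarith
    have h2 : q * b ≤ q * p := by omega
    exact Nat.le_of_mul_le_mul_left h2 (by omega)
  have hgbp : Nat.gcd b p = 1 := by
    have hd1 : Nat.gcd b p ∣ a * p + 1 := by
      rw [← hb]; exact Dvd.dvd.mul_left (Nat.gcd_dvd_left _ _) q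
    have hd2 : Nat.gcd b p ∣ a * p := Dvd.dvd.mul_left (Nat.gcd_dvd_right _ _) a
    exact Nat.eq_one_of_dvd_one ((Nat.dvd_add_right hd2).mp hd1)
  have hfarey : IsFarey Q b p := ⟨hbpos, hbp, hphigh, hgbp⟩
  have hb' : b * q = a * p + 1 := by rw [Nat.mul_comm]; exact hb
  have hab : (a : ℚ) / q < (b : ℚ) / p := by
    rw [nat_div_lt_div a q b p hq hppos]; omega
  have hge : (a' : ℚ) / q' ≤ (b : ℚ) / p := by
    by_contra hc
    push_neg at hc
    exact hmax b p hfarey ⟨hab, hc⟩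
  rcases eq_or_lt_of_le hge with heq | hltb
  · -- b/p = a'/q' forces b = a', p = q'
    have hcross2 : a' * p = b * q' := by
      have h1 : (a' : ℚ) * p = (b : ℚ) * q' := by
        rw [div_eq_div_iff (Nat.cast_ne_zero.mpr (by omega))
          (Nat.cast_ne_zero.mpr (by omega))] at heq
        exact heq
      exact_mod_cast h1
    have hq'p : q' ∣ p := by
      have hd : q' ∣ a' * p := ⟨b, by rw [hcross2]; ring⟩
      exact Nat.Coprime.dvd_of_dvd_mul_left (Nat.coprime_comm.mp hg') hd
    have hpq' : p ∣ q' := by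
      have hd : p ∣ b * q' := ⟨a', by rw [← hcross2]; ring⟩
      exact Nat.Coprime.dvd_of_dvd_mul_left (Nat.coprime_comm.mp hgbp) hd
    have hpe : p = q' := Nat.dvd_antisymm hpq' hq'p
    have hbe : b = a' := by
      rw [hpe] at hcross2
      exact (Nat.eq_of_mul_eq_mul_right (by omega) hcross2).symm
    rw [hbe, hpe] at hb
    rw [Nat.mul_comm a' q]
    exact hb
  · -- strict: contradiction with q' ≤ Q < p + q
    exfalso
    have hcross2 : a' * p < b * q' := (nat_div_lt_div a' q' b p hq' hppos).mp hltb
    have hkey : p + q ≤ q' := by nlinarith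
    omega

theorem farey_interval_inequalities (ε : ℝ) (hε : 0 < ε) (hε' : ε < 1 / 2)
    (Q : ℕ) (hQ : Q = Nat.floor (1 / ε)) (a q a' q' : ℕ)
    (h : FareyConsec Q a q a' q') (hqq' : q < q') :
    (a : ℝ) / q ≤ ((a' : ℝ) - ε) / q' ∧
    ((a' : ℝ) - ε) / q' < ((a : ℝ) + ε) / q ∧
    ((a : ℝ) + ε) / q ≤ (a' : ℝ) / q' := by
  obtain ⟨⟨ha1, haq, hqQ, hg⟩, ⟨ha'1, ha'q', hq'Q, hg'⟩, hlt, hmax⟩ := id h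
  have hdet : a' * q = a * q' + 1 := farey_consec_det h
  have hsum : Q < q + q' := farey_consec_sum h
  have hq : (0 : ℝ) < q := by exact_mod_cast lt_of_lt_of_le ha1 haq
  have hq' : (0 : ℝ) < q' := by exact_mod_cast lt_of_lt_of_le ha'1 ha'q'
  have hdetR : (a' : ℝ) * q = (a : ℝ) * q' + 1 := by exact_mod_cast hdet
  have hQle : (Q : ℝ) ≤ 1 / ε := by
    rw [hQ]; exact Nat.floor_le (by positivity)
  have hQgt : (1 : ℝ) / ε < Q + 1 := by
    rw [hQ]; exact Nat.lt_floor_add_one _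
  have hεq' : ε * q' ≤ 1 := by
    have h1 : (q' : ℝ) ≤ (Q : ℝ) := by exact_mod_cast hq'Q
    have h2 : (q' : ℝ) ≤ 1 / ε := le_trans h1 hQle
    calc ε * q' ≤ ε * (1 / ε) := by nlinarith
      _ = 1 := by field_simp
  have hεq : ε * q ≤ 1 := by
    have h1 : (q : ℝ) ≤ q' := by exact_mod_cast le_of_lt hqq'
    nlinarith
  have hεsum : 1 < ε * (q + q') := by
    have h1 : (Q : ℝ) + 1 ≤ (q : ℝ) + q' := by exact_mod_cast hsum
    have h2 : 1 / ε < (q : ℝ) + q' := lt_of_lt_of_le hQgt h1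
    have h3 : ε * (1 / ε) < ε * ((q : ℝ) + q') := by nlinarith
    calc (1 : ℝ) = ε * (1 / ε) := by field_simp
      _ < _ := h3
  refine ⟨?_, ?_, ?_⟩
  · rw [div_le_div_iff₀ hq hq']
    nlinarith
  · rw [div_lt_div_iff₀ hq' hq]
    nlinarith
  · rw [div_le_div_iff₀ hq hq']
    nlinarith
end

section
/- The limit as r → 0⁺ of c_r = (12/π²) ∫₀^{1/2} ( x(x^{r-1}+(1-x)^{r-1}) + (1-(1-x)^r)/(r x(1-x)) - (1-(1-x)^{r+1})/((r+1) x(1-x)) ) dx equals -(12/π²) ∫₀^{1/2} ln(1-x)/(x(1-x)) dx, and this value is 1. -/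
open Real Filter

/-- The constant `c_r` of Theorem 1.1. -/
noncomputable def cConst (r : ℝ) : ℝ :=
  (12 / π ^ 2) *
    ∫ x in (0 : ℝ)..(1 / 2),
      (x * (x ^ (r - 1) + (1 - x) ^ (r - 1))
        + (1 - (1 - x) ^ r) / (r * x * (1 - x))
        - (1 - (1 - x) ^ (r + 1)) / ((r + 1) * x * (1 - x)))

/-!
For `r > 0` and `0 < x ≤ 1/2` the integrand is bounded by `6`, since
`1 - a ^ s ≤ -s log a ≤ s (a⁻¹ - 1)` controls both difference quotients. As `r → 0⁺` it tends to
`-log (1 - x) / (x (1 - x))`: the quotient `(1 - (1 - x) ^ r) / r` tends to `-log (1 - x)`, and the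
remaining terms tend to `1 + x / (1 - x) - 1 / (1 - x) = 0`. Dominated convergence gives the limit.
The substitution `x = u / (1 + u)` turns the limiting integral into
`-∫₀¹ log (1 + u) / u du = -∑ (-1)ⁿ / (n + 1)² = -π² / 12`.
-/

open MeasureTheory Set Topology

theorem hasSum_neg_one_pow_div_succ_sq :
    HasSum (fun n : ℕ => (-1) ^ n / ((n : ℝ) + 1) ^ 2) (π ^ 2 / 12) := by
  have hzeta : HasSum (fun n : ℕ => 1 / ((n : ℝ) + 1) ^ 2) (π ^ 2 / 6) := by
    simpa using (hasSum_nat_add_iff' 1).mpr hasSum_zeta_two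
  -- The even-indexed terms cancel; the odd ones are `2 / (2k + 2)^2 = (1 / (k + 1)^2) / 2`.
  have hodd : HasSum (fun n : ℕ => 1 / ((n : ℝ) + 1) ^ 2 - (-1) ^ n / ((n : ℝ) + 1) ^ 2)
      (0 + π ^ 2 / 6 / 2) := by
    refine HasSum.even_add_odd ?_ ?_
    · simp [pow_mul, hasSum_zero]
    · refine (hzeta.div_const 2).congr_fun fun k => ?_
      simp only [pow_succ, pow_mul]
      push_cast
      field_simp
      ring
  simpa only [sub_sub_cancel, show π ^ 2 / 6 - (0 + π ^ 2 / 6 / 2) = π ^ 2 / 12 by ring]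
    using hzeta.sub hodd

theorem integral_log_one_add_div_self :
    ∫ u in (0 : ℝ)..1, log (1 + u) / u = π ^ 2 / 12 := by
  let F : ℕ → ℝ → ℝ := fun n u => (-1) ^ n / ((n : ℝ) + 1) * u ^ n
  have hsum : ∀ u ∈ Ioo (0 : ℝ) 1, ∑' n, F n u = log (1 + u) / u := by
    intro u ⟨hu0, hu1⟩
    have h := (hasSum_pow_div_log_of_abs_lt_one (x := -u)
      (by rw [abs_neg, abs_of_pos hu0]; exact hu1)).div_const (-u)
    rw [sub_neg_eq_add] at h
    convert h.tsum_eq using 1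
    · congr 1; ext n
      simp only [F, pow_succ, neg_pow u]
      field_simp
    · field_simp
  have hint : ∀ n : ℕ, ∫ u in Ioo (0 : ℝ) 1, u ^ n = 1 / ((n : ℝ) + 1) := by
    intro n
    rw [← integral_Ioc_eq_integral_Ioo, ← intervalIntegral.integral_of_le zero_le_one,
      integral_pow]
    simp
  have hnorm : ∀ n : ℕ, ∫ u in Ioo (0 : ℝ) 1, ‖F n u‖ = 1 / ((n : ℝ) + 1) ^ 2 := by
    intro n
    rw [setIntegral_congr_fun measurableSet_Ioo (g := fun u => 1 / ((n : ℝ) + 1) * u ^ n)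
      fun u hu => by simp [F, abs_of_pos hu.1]; exact .inl (by positivity), integral_const_mul, hint]
    field_simp
  have hF : ∀ n, Integrable (F n) (volume.restrict (Ioo (0 : ℝ) 1)) := fun n =>
    (continuous_const.mul (continuous_pow n)).integrableOn_Icc.mono_set Ioo_subset_Icc_self
  have hF_sum : Summable fun n => ∫ u in Ioo (0 : ℝ) 1, ‖F n u‖ := by
    simp only [hnorm]
    exact_mod_cast (summable_nat_add_iff 1).mpr (Real.summable_one_div_nat_pow.mpr one_lt_two)
  calc ∫ u in (0 : ℝ)..1, log (1 + u) / u
      = ∫ u in Ioo (0 : ℝ) 1, ∑' n, F n u := by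
        rw [intervalIntegral.integral_of_le zero_le_one, integral_Ioc_eq_integral_Ioo]
        exact setIntegral_congr_fun measurableSet_Ioo fun u hu => (hsum u hu).symm
    _ = ∑' n, ∫ u in Ioo (0 : ℝ) 1, F n u :=
        (integral_tsum_of_summable_integral_norm hF hF_sum).symm
    _ = π ^ 2 / 12 := by
        simp only [F, integral_const_mul, hint]
        convert hasSum_neg_one_pow_div_succ_sq.tsum_eq using 3
        field_simp

theorem integral_log_one_sub_div_mul_one_sub :
    ∫ x in (0 : ℝ)..(1 / 2), log (1 - x) / (x * (1 - x)) = -(π ^ 2 / 12) := by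
  -- Substitute `x = u / (1 + u)`, `dx = du / (1 + u)^2`.
  have hderiv : ∀ u ∈ Ioo (min (0 : ℝ) 1) (max 0 1),
      HasDerivAt (fun u : ℝ => u / (1 + u)) (1 / (1 + u) ^ 2) u := by
    intro u hu
    simp only [min_eq_left zero_le_one, max_eq_right zero_le_one] at hu
    exact ((hasDerivAt_id' u).div ((hasDerivAt_id' u).const_add 1) (by linarith [hu.1])).congr_deriv
      (by ring)
  have hsubst := intervalIntegral.integral_comp_mul_deriv_of_deriv_nonneg
    (g := fun x : ℝ => log (1 - x) / (x * (1 - x)))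
    (continuousOn_id.div (continuousOn_const.add continuousOn_id) fun u hu => by
      simp only [uIcc_of_le zero_le_one] at hu; simp only [Pi.add_apply, id]; linarith [hu.1])
    hderiv fun u _ => by positivity
  norm_num at hsubst
  rw [← hsubst, ← neg_eq_iff_eq_neg, ← integral_log_one_add_div_self,
    ← intervalIntegral.integral_neg]
  refine intervalIntegral.integral_congr fun u hu => ?_
  simp only [uIcc_of_le zero_le_one] at hu
  have hu1 : 0 < 1 + u := by linarith [hu.1]
  rcases hu.1.eq_or_lt with rfl | hu0
  · simp
  have : 1 - u / (1 + u) = (1 + u)⁻¹ := by field_simp; ring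
  simp only [this, log_inv]
  field_simp

theorem one_sub_rpow_le_neg_mul_log {a : ℝ} (ha : 0 < a) (s : ℝ) : 1 - a ^ s ≤ -(s * log a) := by
  rw [rpow_def_of_pos ha, mul_comm]
  linarith [add_one_le_exp (s * log a)]

theorem one_sub_rpow_div_le {x s : ℝ} (hx0 : 0 < x) (hx1 : x < 1) (hs : 0 < s) :
    (1 - (1 - x) ^ s) / (s * x * (1 - x)) ≤ 1 / (1 - x) ^ 2 := by
  have h1x : 0 < 1 - x := by linarith
  rw [div_le_iff₀ (by positivity)]
  calc 1 - (1 - x) ^ s ≤ -(s * log (1 - x)) := one_sub_rpow_le_neg_mul_log h1x s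
    _ ≤ s * ((1 - x)⁻¹ - 1) := by nlinarith [one_sub_inv_le_log_of_pos h1x]
    _ = 1 / (1 - x) ^ 2 * (s * x * (1 - x)) := by field_simp; ring

theorem tendsto_one_sub_rpow_div {a : ℝ} (ha : 0 < a) :
    Tendsto (fun s => (1 - a ^ s) / s) (𝓝[≠] 0) (𝓝 (-log a)) := by
  have h := (hasDerivAt_iff_tendsto_slope.mp (hasStrictDerivAt_const_rpow ha 0).hasDerivAt).neg
  simp only [slope_def_field, rpow_zero, one_mul, sub_zero] at h
  exact h.congr fun s => by rw [← neg_div, neg_sub]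

noncomputable def cIntegrand (r x : ℝ) : ℝ :=
  x * (x ^ (r - 1) + (1 - x) ^ (r - 1))
    + (1 - (1 - x) ^ r) / (r * x * (1 - x))
    - (1 - (1 - x) ^ (r + 1)) / ((r + 1) * x * (1 - x))

theorem abs_cIntegrand_le {r x : ℝ} (hr : 0 < r) (hx : x ∈ Ioc (0 : ℝ) (1 / 2)) :
    |cIntegrand r x| ≤ 6 := by
  obtain ⟨hx0, hx2⟩ := hx
  have h1x : 0 < 1 - x := by linarith
  have hpow : x * x ^ (r - 1) = x ^ r := by
    rw [mul_comm, ← rpow_add_one hx0.ne', sub_add_cancel]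
  have hpow_le : x ^ r ≤ 1 := rpow_le_one hx0.le (by linarith) hr.le
  have hpow' : x * (1 - x) ^ (r - 1) ≤ 1 := calc
    x * (1 - x) ^ (r - 1) ≤ x * (1 - x) ^ (-1 : ℝ) := mul_le_mul_of_nonneg_left
      (rpow_le_rpow_of_exponent_ge h1x (by linarith) (by linarith)) hx0.le
    _ ≤ 1 := by rw [rpow_neg_one, ← div_eq_mul_inv, div_le_one h1x]; linarith
  have hquot : ∀ s > 0, 0 ≤ (1 - (1 - x) ^ s) / (s * x * (1 - x)) ∧
      (1 - (1 - x) ^ s) / (s * x * (1 - x)) ≤ 4 := fun s hs =>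
    ⟨div_nonneg (sub_nonneg.2 (rpow_le_one h1x.le (by linarith) hs.le)) (by positivity),
      (one_sub_rpow_div_le hx0 (by linarith) hs).trans (by
        rw [div_le_iff₀ (by positivity)]; nlinarith)⟩
  obtain ⟨h3, h3'⟩ := hquot r hr
  obtain ⟨h4, h4'⟩ := hquot (r + 1) (by linarith)
  have : 0 ≤ x * (1 - x) ^ (r - 1) := by positivity
  rw [cIntegrand, mul_add, hpow, abs_le]
  constructor <;> linarith [rpow_nonneg hx0.le r]

theorem tendsto_cIntegrand {x : ℝ} (hx0 : 0 < x) (hx1 : x < 1) :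
    Tendsto (fun r => cIntegrand r x) (𝓝[>] 0) (𝓝 (-(log (1 - x) / (x * (1 - x))))) := by
  have h1x : 0 < 1 - x := by linarith
  set G : ℝ → ℝ := fun r =>
    x * (x ^ (r - 1) + (1 - x) ^ (r - 1)) - (1 - (1 - x) ^ (r + 1)) / ((r + 1) * x * (1 - x))
  have hG : ContinuousAt G 0 := by
    have : Continuous fun r : ℝ => x ^ r := continuous_const.rpow continuous_id fun _ => .inl hx0.ne'
    have : Continuous fun r : ℝ => (1 - x) ^ r :=
      continuous_const.rpow continuous_id fun _ => .inl h1x.ne'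
    have : (0 + 1) * x * (1 - x) ≠ 0 := by positivity
    fun_prop (disch := assumption)
  have hG0 : G 0 = 0 := by
    simp only [G, zero_sub, zero_add, rpow_neg_one, rpow_one]
    field_simp
    ring
  have hquot := ((tendsto_one_sub_rpow_div h1x).mono_left
    (nhdsWithin_mono _ fun r (hr : r ∈ Ioi 0) => ne_of_gt hr)).div_const (x * (1 - x))
  convert (hG0 ▸ hG.tendsto.mono_left nhdsWithin_le_nhds).add hquot using 1
  · ext r
    simp only [cIntegrand, G, div_div, mul_assoc]
    ring
  · congr 1
    ring

theorem tendsto_integral_cIntegrand :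
    Tendsto (fun r => ∫ x in (0 : ℝ)..(1 / 2), cIntegrand r x) (𝓝[>] 0)
      (𝓝 (-∫ x in (0 : ℝ)..(1 / 2), log (1 - x) / (x * (1 - x)))) := by
  rw [← intervalIntegral.integral_neg]
  refine intervalIntegral.tendsto_integral_filter_of_dominated_convergence (fun _ => 6)
    (.of_forall fun r => Measurable.aestronglyMeasurable (by unfold cIntegrand; fun_prop)) ?_
    intervalIntegrable_const (ae_of_all _ fun x hx => ?_)
  · filter_upwards [self_mem_nhdsWithin] with r hr
    exact ae_of_all _ fun x hx => abs_cIntegrand_le hr (by rwa [uIoc_of_le (by norm_num)] at hx)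
  · rw [uIoc_of_le (by norm_num)] at hx
    exact tendsto_cIntegrand hx.1 (by linarith [hx.2])

theorem tendsto_cConst_zero :
    Tendsto cConst (nhdsWithin 0 (Set.Ioi 0))
      (nhds (-(12 / π ^ 2) * ∫ x in (0 : ℝ)..(1 / 2), Real.log (1 - x) / (x * (1 - x)))) ∧
    -(12 / π ^ 2) * (∫ x in (0 : ℝ)..(1 / 2), Real.log (1 - x) / (x * (1 - x))) = 1 := by
  refine ⟨?_, ?_⟩
  · rw [neg_mul_comm]
    exact tendsto_integral_cIntegrand.const_mul _
  · rw [integral_log_one_sub_div_mul_one_sub]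
    field_simp
end

section
/- With ε₊, ε₋ as above (0 < ε ≤ 1/2, integers 1 ≤ a ≤ q), one has |ε₊(q,a) - ε√(1 + a²/q²)| ≤ C ε²/q and |ε₋(q,a) - ε√(1 + a²/q²)| ≤ C ε²/q for some absolute constant C. Equivalently, ε₊(q,a) = ε/cos(arctan(a/q)) + O(ε²/q). -/
/-!
Write `D = q² - ε²` and `R = √(1 + a²/q²)`. Then

  `ε± - εR = ±aε²/D + (ε/D)(√(q⁴ + a²q² - a²ε²) - q²R) + (ε/D)Rε²`.

Once `2ε ≤ q` we have `D ≥ 3q²/4`, so the outer terms are `O(ε²/q)`; so is the middle one,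
because `q²R = √(q⁴ + a²q²)` and two square roots of numbers `≥ q⁴` that differ by `a²ε²`
differ by at most `a²ε²/(2q²) ≤ ε²`.
-/

open Real

lemma Real.sqrt_sub_sqrt_le_div {x y m : ℝ} (hm : 0 < m) (hmy : m ^ 2 ≤ y) (hyx : y ≤ x) :
    √x - √y ≤ (x - y) / (2 * m) := by
  have hy : 0 ≤ y := (sq_nonneg m).trans hmy
  have hmy' : m ≤ √y := le_sqrt_of_sq_le hmy
  have hyx' : √y ≤ √x := sqrt_le_sqrt hyx
  have hprod : (√x - √y) * (√x + √y) = x - y := by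
    rw [mul_comm, ← sq_sub_sq, sq_sqrt (hy.trans hyx), sq_sqrt hy]
  rw [le_div_iff₀ (by positivity), ← hprod]
  exact mul_le_mul_of_nonneg_left (by linarith) (sub_nonneg.2 hyx')

lemma sq_mul_sqrt_one_add_div_sq (a q : ℝ) :
    q ^ 2 * √(1 + a ^ 2 / q ^ 2) = √(q ^ 4 + a ^ 2 * q ^ 2) := by
  rcases eq_or_ne q 0 with rfl | hq
  · simp
  have h : q ^ 4 + a ^ 2 * q ^ 2 = (q ^ 2) ^ 2 * (1 + a ^ 2 / q ^ 2) := by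
    field_simp
  rw [h, sqrt_mul (by positivity), sqrt_sq (sq_nonneg q)]

lemma abs_sqrt_sub_sq_mul_sqrt_one_add_div_sq_le {q a ε : ℝ} (hq : 0 < q) (ha : |a| ≤ q)
    (hε : |ε| ≤ q) :
    |√(q ^ 4 + a ^ 2 * q ^ 2 - a ^ 2 * ε ^ 2) - q ^ 2 * √(1 + a ^ 2 / q ^ 2)| ≤ ε ^ 2 := by
  have ha2 : a ^ 2 ≤ q ^ 2 := sq_le_sq' (abs_le.1 ha).1 (abs_le.1 ha).2
  have hε2 : ε ^ 2 ≤ q ^ 2 := sq_le_sq' (abs_le.1 hε).1 (abs_le.1 hε).2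
  have hlower : (q ^ 2) ^ 2 ≤ q ^ 4 + a ^ 2 * q ^ 2 - a ^ 2 * ε ^ 2 := by
    nlinarith [mul_le_mul_of_nonneg_left hε2 (sq_nonneg a)]
  have hle : q ^ 4 + a ^ 2 * q ^ 2 - a ^ 2 * ε ^ 2 ≤ q ^ 4 + a ^ 2 * q ^ 2 :=
    sub_le_self _ (by positivity)
  rw [sq_mul_sqrt_one_add_div_sq, abs_sub_comm, abs_of_nonneg (sub_nonneg.2 (sqrt_le_sqrt hle))]
  calc √(q ^ 4 + a ^ 2 * q ^ 2) - √(q ^ 4 + a ^ 2 * q ^ 2 - a ^ 2 * ε ^ 2)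
      ≤ a ^ 2 * ε ^ 2 / (2 * q ^ 2) := by
        convert sqrt_sub_sqrt_le_div (by positivity) hlower hle using 2
        ring
    _ ≤ ε ^ 2 := by
        rw [div_le_iff₀ (by positivity)]
        nlinarith [mul_le_mul_of_nonneg_right ha2 (sq_nonneg ε)]

lemma abs_tangent_half_width_sub_le {q a b ε : ℝ} (hε : 0 < ε) (hεq : 2 * ε ≤ q) (ha : |a| ≤ q)
    (hb : |b| ≤ |a| * ε ^ 2) :
    |(b / (q ^ 2 - ε ^ 2) + ε / (q ^ 2 - ε ^ 2) * √(q ^ 4 + a ^ 2 * q ^ 2 - a ^ 2 * ε ^ 2)) -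
      ε * √(1 + a ^ 2 / q ^ 2)| ≤ 4 * ε ^ 2 / q := by
  have hq : 0 < q := by linarith
  have hSR := abs_sqrt_sub_sq_mul_sqrt_one_add_div_sq_le hq ha
    (by rw [abs_of_pos hε]; linarith)
  set D := q ^ 2 - ε ^ 2
  set S := √(q ^ 4 + a ^ 2 * q ^ 2 - a ^ 2 * ε ^ 2)
  set R := √(1 + a ^ 2 / q ^ 2)
  have hD : 0 < D := by nlinarith
  have hqD : q / D ≤ 4 / (3 * q) := by
    rw [div_le_div_iff₀ hD (by positivity)]
    nlinarith
  have hεD : ε / D ≤ 2 / (3 * q) := by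
    rw [div_le_div_iff₀ hD (by positivity)]
    nlinarith
  have hR : R ≤ 2 := by
    have : a ^ 2 / q ^ 2 ≤ 1 := div_le_one_of_le₀ (sq_le_sq' (abs_le.1 ha).1 (abs_le.1 ha).2)
      (sq_nonneg q)
    rw [sqrt_le_left zero_le_two]
    linarith
  have hsplit :
      b / D + ε / D * S - ε * R = b / D + ε / D * (S - q ^ 2 * R) + ε / D * R * ε ^ 2 := by
    field_simp
    ring
  calc |b / D + ε / D * S - ε * R|
      = |b / D + ε / D * (S - q ^ 2 * R) + ε / D * R * ε ^ 2| := by rw [hsplit]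
    _ ≤ |b / D| + |ε / D * (S - q ^ 2 * R)| + |ε / D * R * ε ^ 2| := abs_add_three _ _ _
    _ ≤ 4 / (3 * q) * ε ^ 2 + 2 / (3 * q) * ε ^ 2 + 2 / (3 * q) * 2 * ε ^ 2 := by
      gcongr
      · calc |b / D| = |b| / D := by rw [abs_div, abs_of_pos hD]
          _ ≤ q * ε ^ 2 / D := by gcongr; exact hb.trans (by gcongr)
          _ = q / D * ε ^ 2 := by ring
          _ ≤ 4 / (3 * q) * ε ^ 2 := by gcongr
      · rw [abs_mul, abs_of_pos (by positivity : 0 < ε / D)]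
        gcongr
      · rw [abs_of_nonneg (by positivity)]
        gcongr
    _ ≤ 4 * ε ^ 2 / q := by
      field_simp
      nlinarith

theorem tangent_half_widths_asymptotics :
    ∃ C : ℝ, 0 < C ∧
      ∀ (ε : ℝ) (q a : ℕ), 0 < ε → ε ≤ 1 / 2 → 1 ≤ a → a ≤ q →
        |(a * ε ^ 2 / ((q : ℝ) ^ 2 - ε ^ 2) +
            ε / ((q : ℝ) ^ 2 - ε ^ 2) *
              Real.sqrt ((q : ℝ) ^ 4 + (a : ℝ) ^ 2 * q ^ 2 - (a : ℝ) ^ 2 * ε ^ 2)) -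
          ε * Real.sqrt (1 + (a : ℝ) ^ 2 / (q : ℝ) ^ 2)| ≤ C * ε ^ 2 / q ∧
        |(-(a * ε ^ 2) / ((q : ℝ) ^ 2 - ε ^ 2) +
            ε / ((q : ℝ) ^ 2 - ε ^ 2) *
              Real.sqrt ((q : ℝ) ^ 4 + (a : ℝ) ^ 2 * q ^ 2 - (a : ℝ) ^ 2 * ε ^ 2)) -
          ε * Real.sqrt (1 + (a : ℝ) ^ 2 / (q : ℝ) ^ 2)| ≤ C * ε ^ 2 / q := by
  refine ⟨4, four_pos, fun ε q a hε hε2 ha haq => ?_⟩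
  have hq : (1 : ℝ) ≤ q := by exact_mod_cast ha.trans haq
  have hεq : 2 * ε ≤ q := by linarith
  have haq' : |(a : ℝ)| ≤ q := by rw [Nat.abs_cast]; exact_mod_cast haq
  exact ⟨abs_tangent_half_width_sub_le hε hεq haq' (by rw [abs_mul, abs_sq]),
    abs_tangent_half_width_sub_le hε hεq haq' (by rw [abs_neg, abs_mul, abs_sq])⟩
end

section
/- Let 0 < ε < 1/2, Q = ⌊1/ε⌋, and let a/q < a'/q' be consecutive Farey fractions of order Q with q < q'. Then the set of angles ω ∈ [arctan(a/q), arctan(a'/q')] such that the ray from the origin with direction (cos ω, sin ω) meets neither the vertical segment {q} × [a-ε, a+ε] nor the segment {q'} × [a'-ε, a'+ε] is empty; i.e., tan ω ∈ [a/q, a'/q'] implies the ray hits one of these two crosses. -/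
set_option maxHeartbeats 1000000 in
lemma farey_unimodular (Q a q a' q' : ℕ) (h : FareyConsec Q a q a' q') (hqq' : q < q') :
    q * a' = q' * a + 1 ∧ Q < q + q' := by
  obtain ⟨⟨ha1, haq, hqQ, hgcd⟩, ⟨ha'1, ha'q', hq'Q, hgcd'⟩, hlt, hcons⟩ := h
  have hq0 : 0 < q := le_trans ha1 haq
  have hq'0 : 0 < q' := le_trans ha'1 ha'q'
  have hqR : (0:ℚ) < q := by exact_mod_cast hq0
  have hq'R : (0:ℚ) < q' := by exact_mod_cast hq'0
  have hcrossQ : (a:ℚ) * q' < a' * q := (div_lt_div_iff₀ hqR hq'R).mp hlt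
  have hcrossN : a * q' + 1 ≤ a' * q := by
    have : a * q' < a' * q := by exact_mod_cast hcrossQ
    omega
  have ha'2 : 2 ≤ a' := by
    rcases Nat.lt_or_ge a' 2 with hc | hc
    · exfalso
      have ha'eq : a' = 1 := by omega
      subst ha'eq
      have : q' ≤ a * q' := Nat.le_mul_of_pos_left _ ha1
      omega
    · exact hc
  -- Bezout
  have hcop : IsCoprime (a':ℤ) (q':ℤ) := by
    rw [Int.isCoprime_iff_gcd_eq_one]
    simpa [Int.gcd] using hgcd'
  obtain ⟨u, v, huv⟩ := hcop
  set k : ℤ := ((Q:ℤ) - u) / q' with hk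
  set p : ℤ := u + k * q' with hpdef
  set b : ℤ := -v + k * a' with hbdef
  have hq'Z : (0:ℤ) < q' := by exact_mod_cast hq'0
  have hkey : (a':ℤ) * p - q' * b = 1 := by
    simp only [hpdef, hbdef]
    linear_combination huv
  have hmod1 : 0 ≤ ((Q:ℤ) - u) % q' := Int.emod_nonneg _ hq'Z.ne'
  have hmod2 : ((Q:ℤ) - u) % q' < q' := Int.emod_lt_of_pos _ hq'Z
  have hdm : (q':ℤ) * k + ((Q:ℤ) - u) % q' = (Q:ℤ) - u := Int.mul_ediv_add_emod _ _
  have hpQ : (Q:ℤ) - q' < p ∧ p ≤ (Q:ℤ) := by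
    constructor
    · simp only [hpdef]; linarith
    · simp only [hpdef]; linarith
  have hq'QZ : (q':ℤ) ≤ Q := by exact_mod_cast hq'Q
  have hp1 : 1 ≤ p := by omega
  have ha'2Z : (2:ℤ) ≤ a' := by exact_mod_cast ha'2
  have hb1 : 1 ≤ b := by
    by_contra hb
    push_neg at hb
    have hb0 : b ≤ 0 := by omega
    nlinarith [mul_nonpos_of_nonneg_of_nonpos hq'Z.le hb0]
  have ha'q'Z : (a':ℤ) ≤ q' := by exact_mod_cast ha'q'
  have hbp : b < p := by nlinarith
  clear_value k p b
  -- pass to naturals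
  set B : ℕ := b.toNat with hB
  set P : ℕ := p.toNat with hP
  have hBZ : (B:ℤ) = b := Int.toNat_of_nonneg (by omega)
  have hPZ : (P:ℤ) = p := Int.toNat_of_nonneg (by omega)
  clear_value B P
  have hgcdBP : Nat.gcd B P = 1 := by
    have hcop2 : IsCoprime b p := ⟨-(q':ℤ), a', by linear_combination hkey⟩
    rw [Int.isCoprime_iff_gcd_eq_one, Int.gcd] at hcop2
    have h1 : b.natAbs = B := by omega
    have h2 : p.natAbs = P := by omega
    rwa [h1, h2] at hcop2
  have hFareyBP : IsFarey Q B P := by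
    refine ⟨by omega, by omega, by omega, hgcdBP⟩
  have hP0 : (0:ℚ) < P := by
    have : 0 < P := by omega
    exact_mod_cast this
  have hBPlt : (B:ℚ)/P < (a':ℚ)/q' := by
    rw [div_lt_div_iff₀ hP0 hq'R]
    have : (q':ℤ) * b < a' * p := by omega
    have h2 : (q':ℤ) * B < a' * P := by rw [hBZ, hPZ]; exact this
    exact_mod_cast by linarith [h2]
  have hnot := hcons B P hFareyBP
  have hle : (B:ℚ)/P ≤ (a:ℚ)/q := by
    by_contra hgt
    push_neg at hgt
    exact hnot ⟨hgt, hBPlt⟩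
  rcases hle.lt_or_eq with hltBP | heqBP
  · exfalso
    have hcross2 : (B:ℚ) * q < a * P := (div_lt_div_iff₀ hP0 hqR).mp hltBP
    have hcross2Z : (b:ℤ) * q + 1 ≤ a * p := by
      have : B * q < a * P := by exact_mod_cast hcross2
      have h2 : (B:ℤ) * q < a * P := by exact_mod_cast this
      rw [hBZ, hPZ] at h2; omega
    have hcrossZ : (a:ℤ) * q' + 1 ≤ a' * q := by exact_mod_cast hcrossN
    have hqQZ : (q:ℤ) ≤ Q := by exact_mod_cast hqQ
    have hid : (q:ℤ) = p * ((a':ℤ) * q - a * q') + q' * ((a:ℤ) * p - b * q) := by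
      linear_combination (-(q:ℤ)) * hkey
    have hm1 : p * 1 ≤ p * ((a':ℤ) * q - a * q') :=
      mul_le_mul_of_nonneg_left (by linarith : (1:ℤ) ≤ (a':ℤ) * q - a * q') (by omega : (0:ℤ) ≤ p)
    have hm2 : (q':ℤ) * 1 ≤ q' * ((a:ℤ) * p - b * q) :=
      mul_le_mul_of_nonneg_left (by linarith : (1:ℤ) ≤ (a:ℤ) * p - b * q) (by linarith : (0:ℤ) ≤ (q':ℤ))
    linarith [hpQ.1, hm1, hm2, hid, hqQZ]
  · -- B/P = a/q  ⇒ B = a, P = q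
    have hcrossEq : (B:ℚ) * q = a * P := (div_eq_div_iff hP0.ne' hqR.ne').mp heqBP
    have hcrossEqN : B * q = a * P := by exact_mod_cast hcrossEq
    have hPq : P = q := by
      have hd1 : q ∣ P := by
        have : q ∣ a * P := ⟨B, by rw [← hcrossEqN]; ring⟩
        exact (Nat.Coprime.dvd_of_dvd_mul_left (Nat.coprime_comm.mp hgcd) this)
      have hd2 : P ∣ q := by
        have : P ∣ B * q := ⟨a, by rw [hcrossEqN]; ring⟩
        exact (Nat.Coprime.dvd_of_dvd_mul_left (Nat.coprime_comm.mp hgcdBP) this)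
      exact Nat.dvd_antisymm hd2 hd1
    have hBa : B = a :=
      Nat.eq_of_mul_eq_mul_right hq0 (by rw [hcrossEqN, hPq])
    have h5 : (a':ℤ) * P - q' * B = 1 := by rw [hPZ, hBZ]; exact hkey
    rw [hPq, hBa] at h5
    have hfin : (q:ℤ) * a' = q' * a + 1 := by linarith
    refine ⟨by exact_mod_cast hfin, ?_⟩
    have : (Q:ℤ) - q' < P := by rw [hPZ]; exact hpQ.1
    rw [hPq] at this
    omega


set_option maxHeartbeats 1000000 in
theorem ray_hits_one_of_two_scatterers (ε : ℝ) (hε : 0 < ε) (hε' : ε < 1 / 2)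
    (Q : ℕ) (hQ : Q = Nat.floor (1 / ε)) (a q a' q' : ℕ)
    (h : FareyConsec Q a q a' q') (hqq' : q < q') :
    ∀ ω : ℝ, Real.arctan ((a : ℝ) / q) ≤ ω → ω ≤ Real.arctan ((a' : ℝ) / q') →
      ∃ τ : ℝ, 0 < τ ∧
        ((τ * Real.cos ω = q ∧ |τ * Real.sin ω - a| ≤ ε) ∨
         (τ * Real.cos ω = q' ∧ |τ * Real.sin ω - a'| ≤ ε)) := by
  intro ω hω1 hω2
  obtain ⟨huni, hQlt⟩ := farey_unimodular Q a q a' q' h hqq'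
  obtain ⟨⟨ha1, haq, hqQ, hgcd⟩, ⟨ha'1, ha'q', hq'Q, hgcd'⟩, hlt, hcons⟩ := h
  have hq0 : 0 < q := le_trans ha1 haq
  have hq'0 : 0 < q' := lt_trans hq0 hqq'
  have hqR : (0:ℝ) < q := by exact_mod_cast hq0
  have hq'R : (0:ℝ) < q' := by exact_mod_cast hq'0
  have hωmem : ω ∈ Set.Ioo (-(Real.pi/2)) (Real.pi/2) :=
    ⟨lt_of_lt_of_le (Real.neg_pi_div_two_lt_arctan _) hω1,
     lt_of_le_of_lt hω2 (Real.arctan_lt_pi_div_two _)⟩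
  have hcos : 0 < Real.cos ω := Real.cos_pos_of_mem_Ioo hωmem
  have ht1 : (a:ℝ)/q ≤ Real.tan ω := by
    calc (a:ℝ)/q = Real.tan (Real.arctan ((a:ℝ)/q)) := (Real.tan_arctan _).symm
    _ ≤ Real.tan ω := Real.strictMonoOn_tan.monotoneOn (Real.arctan_mem_Ioo _) hωmem hω1
  have ht2 : Real.tan ω ≤ (a':ℝ)/q' := by
    calc Real.tan ω ≤ Real.tan (Real.arctan ((a':ℝ)/q')) :=
          Real.strictMonoOn_tan.monotoneOn hωmem (Real.arctan_mem_Ioo _) hω2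
    _ = (a':ℝ)/q' := Real.tan_arctan _
  have htan : Real.tan ω = Real.sin ω / Real.cos ω := Real.tan_eq_sin_div_cos ω
  have hQε : 1/ε < (Q:ℝ) + 1 := by rw [hQ]; exact Nat.lt_floor_add_one _
  have hεqq : 1 < ε * ((q:ℝ) + q') := by
    have h1 : (Q:ℝ) + 1 ≤ (q:ℝ) + q' := by exact_mod_cast hQlt
    calc (1:ℝ) = ε * (1/ε) := by field_simp
    _ < ε * ((Q:ℝ)+1) := mul_lt_mul_of_pos_left hQε hε
    _ ≤ ε * ((q:ℝ)+q') := mul_le_mul_of_nonneg_left h1 hε.le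
  have huniR : (q:ℝ) * a' = q' * a + 1 := by exact_mod_cast huni
  by_cases hcase : Real.tan ω ≤ ((a:ℝ)+ε)/q
  · refine ⟨q / Real.cos ω, div_pos hqR hcos, Or.inl ⟨div_mul_cancel₀ _ hcos.ne', ?_⟩⟩
    have hsin : (q:ℝ)/Real.cos ω * Real.sin ω = q * Real.tan ω := by
      rw [htan]; field_simp
    rw [hsin, abs_le]
    constructor
    · have hlow : (a:ℝ) ≤ Real.tan ω * q := (div_le_iff₀ hqR).mp ht1
      nlinarith
    · have hup : Real.tan ω * q ≤ (a:ℝ) + ε := (le_div_iff₀ hqR).mp hcase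
      nlinarith
  · push_neg at hcase
    refine ⟨q' / Real.cos ω, div_pos hq'R hcos, Or.inr ⟨div_mul_cancel₀ _ hcos.ne', ?_⟩⟩
    have hsin : (q':ℝ)/Real.cos ω * Real.sin ω = q' * Real.tan ω := by
      rw [htan]; field_simp
    rw [hsin, abs_le]
    constructor
    · -- a' - ε ≤ q' * tan ω
      have hlow : (a:ℝ) + ε < Real.tan ω * q := (div_lt_iff₀ hqR).mp hcase
      have hkey2 : ((a':ℝ) - ε) * q ≤ q' * ((a:ℝ) + ε) := by linarith [huniR, hεqq]
      have h7 : ((a':ℝ) - ε) * q < (q' * Real.tan ω) * q := by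
        have := mul_lt_mul_of_pos_left hlow hq'R
        nlinarith [this, hkey2]
      have h8 : (a':ℝ) - ε < q' * Real.tan ω := lt_of_mul_lt_mul_right h7 hqR.le
      linarith
    · have hup : Real.tan ω * q' ≤ (a':ℝ) := (le_div_iff₀ hq'R).mp ht2
      nlinarith
end
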